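/- Let P be a nondegenerate Poisson bivector on ℝⁿ and B any bivector on ℝⁿ. Then [B, P] = 0 if and only if the two-form ω_B : x ↦ P(x)⁻¹ B(x) P(x)⁻¹ is closed, i.e. (dω_B)_{ijk} := ∂(ω_B)_{jk}/∂xⁱ − ∂(ω_B)_{ik}/∂xʲ + ∂(ω_B)_{ij}/∂x^k = 0 for all i, j, k. -/

import Mathlib

open Matrix BigOperators

noncomputable section

/-- Partial derivative of a scalar function on ℝⁿ in the `k`-th coordinate direction. -/
def pd {n : ℕ} (k : Fin n) (f : (Fin n → ℝ) → ℝ) (x : Fin n → ℝ) : ℝ :=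
  fderiv ℝ f x (Pi.single k 1)

/-- A (smooth) bivector on ℝⁿ: a smooth field of antisymmetric matrices. -/
def IsBivector {n : ℕ} (P : (Fin n → ℝ) → Matrix (Fin n) (Fin n) ℝ) : Prop :=
  (∀ i j, ContDiff ℝ (⊤ : ℕ∞) fun x => P x i j) ∧ ∀ x, (P x)ᵀ = -P x

/-- A smooth vector field on ℝⁿ. -/
def IsVectorField {n : ℕ} (τ : (Fin n → ℝ) → (Fin n → ℝ)) : Prop :=
  ∀ i, ContDiff ℝ (⊤ : ℕ∞) fun x => τ x i

/-- Components of the Schouten bracket of two bivectors: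
`[H,K]^{ijk} = -∑ₘ (K^{mk} ∂ₘH^{ij} + H^{mk} ∂ₘK^{ij} + cyclic permutations of (i,j,k))`. -/
def schouten {n : ℕ} (H K : (Fin n → ℝ) → Matrix (Fin n) (Fin n) ℝ)
    (x : Fin n → ℝ) (i j k : Fin n) : ℝ :=
  -∑ m, (K x m k * pd m (fun y => H y i j) x + H x m k * pd m (fun y => K y i j) x
       + K x m i * pd m (fun y => H y j k) x + H x m i * pd m (fun y => K y j k) x
       + K x m j * pd m (fun y => H y k i) x + H x m j * pd m (fun y => K y k i) x)

/-- Lie derivative of a bivector along a vector field: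
`(L_τ P)^{ij} = ∑ₖ (τ^k ∂ₖP^{ij} - P^{kj} ∂ₖτ^i - P^{ik} ∂ₖτ^j)`. -/
def lieD {n : ℕ} (τ : (Fin n → ℝ) → (Fin n → ℝ))
    (P : (Fin n → ℝ) → Matrix (Fin n) (Fin n) ℝ)
    (x : Fin n → ℝ) : Matrix (Fin n) (Fin n) ℝ :=
  Matrix.of fun i j => ∑ k, (τ x k * pd k (fun y => P y i j) x
    - P x k j * pd k (fun y => τ y i) x - P x i k * pd k (fun y => τ y j) x)

/-- A Poisson bivector: a bivector whose Schouten bracket with itself vanishes. -/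
def IsPoisson {n : ℕ} (P : (Fin n → ℝ) → Matrix (Fin n) (Fin n) ℝ) : Prop :=
  IsBivector P ∧ ∀ x i j k, schouten P P x i j k = 0

/-- Two bivectors are compatible if their Schouten bracket vanishes. -/
def Compatible {n : ℕ} (P Q : (Fin n → ℝ) → Matrix (Fin n) (Fin n) ℝ) : Prop :=
  ∀ x i j k, schouten P Q x i j k = 0

section Auxiliary

variable {n : ℕ}

/-! ### Smoothness helpers -/

private lemma contDiff_finset_prod {ι : Type*} (s : Finset ι) {f : ι → (Fin n → ℝ) → ℝ}
    (hf : ∀ i ∈ s, ContDiff ℝ (⊤ : ℕ∞) (f i)) :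
    ContDiff ℝ (⊤ : ℕ∞) fun x => ∏ i ∈ s, f i x := by
  classical
  induction s using Finset.induction with
  | empty => simpa using contDiff_const
  | @insert a s ha ih =>
    simp only [Finset.prod_insert ha]
    exact (hf a (Finset.mem_insert_self a s)).mul
      (ih fun i hi => hf i (Finset.mem_insert_of_mem hi))

private lemma contDiff_det {f : (Fin n → ℝ) → Matrix (Fin n) (Fin n) ℝ}
    (hf : ∀ i j, ContDiff ℝ (⊤ : ℕ∞) fun x => f x i j) :
    ContDiff ℝ (⊤ : ℕ∞) fun x => (f x).det := by
  have h : (fun x => (f x).det)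
      = fun x => ∑ σ : Equiv.Perm (Fin n), (Equiv.Perm.sign σ : ℤ) * ∏ i, f x (σ i) i := by
    funext x
    rw [Matrix.det_apply]
    simp [Units.smul_def, zsmul_eq_mul]
  rw [h]
  exact ContDiff.sum fun σ _ => contDiff_const.mul (contDiff_finset_prod _ fun i _ => hf (σ i) i)

private lemma contDiff_inv_entry {P : (Fin n → ℝ) → Matrix (Fin n) (Fin n) ℝ}
    (hPs : ∀ i j, ContDiff ℝ (⊤ : ℕ∞) fun x => P x i j) (hnd : ∀ x, IsUnit (P x))
    (a b : Fin n) : ContDiff ℝ (⊤ : ℕ∞) fun x => (P x)⁻¹ a b := by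
  classical
  have hne : ∀ x, (P x).det ≠ 0 := fun x =>
    ((Matrix.isUnit_iff_isUnit_det _).1 (hnd x)).ne_zero
  have hadj : ContDiff ℝ (⊤ : ℕ∞) fun x => (P x).adjugate a b := by
    simp only [Matrix.adjugate_apply]
    apply contDiff_det
    intro i j
    simp only [Matrix.updateRow_apply]
    by_cases h : i = b
    · simp [h, contDiff_const]
    · simpa [h] using hPs i j
  have h : (fun x => (P x)⁻¹ a b) = fun x => ((P x).det)⁻¹ * (P x).adjugate a b := by
    funext x
    rw [Matrix.inv_def]
    simp [Ring.inverse_eq_inv', Matrix.smul_apply, smul_eq_mul]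
  rw [h]
  exact ((contDiff_det hPs).inv hne).mul hadj

/-! ### `pd` calculus -/

private lemma pd_congr {f g : (Fin n → ℝ) → ℝ} (h : ∀ y, f y = g y) (k : Fin n) (x : Fin n → ℝ) :
    pd k f x = pd k g x := by
  have : f = g := funext h
  rw [this]

private lemma pd_const (k : Fin n) (c : ℝ) (x : Fin n → ℝ) : pd k (fun _ => c) x = 0 := by
  simp [pd]

private lemma pd_neg {f : (Fin n → ℝ) → ℝ} (k : Fin n) (x : Fin n → ℝ) :
    pd k (fun y => -f y) x = -pd k f x := by
  simp [pd, fderiv_neg]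

private lemma pd_add {f g : (Fin n → ℝ) → ℝ} {x : Fin n → ℝ} (k : Fin n)
    (hf : DifferentiableAt ℝ f x) (hg : DifferentiableAt ℝ g x) :
    pd k (fun y => f y + g y) x = pd k f x + pd k g x := by
  simp [pd, fderiv_fun_add hf hg]

private lemma pd_mul {f g : (Fin n → ℝ) → ℝ} {x : Fin n → ℝ} (k : Fin n)
    (hf : DifferentiableAt ℝ f x) (hg : DifferentiableAt ℝ g x) :
    pd k (fun y => f y * g y) x = pd k f x * g x + f x * pd k g x := by
  simp [pd, fderiv_fun_mul hf hg]
  ring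

private lemma pd_sum {ι : Type*} {x : Fin n → ℝ} (k : Fin n) (s : Finset ι)
    (f : ι → (Fin n → ℝ) → ℝ) (h : ∀ i ∈ s, DifferentiableAt ℝ (f i) x) :
    pd k (fun y => ∑ i ∈ s, f i y) x = ∑ i ∈ s, pd k (f i) x := by
  classical
  induction s using Finset.induction with
  | empty => simpa using pd_const k 0 x
  | @insert a s ha ih =>
    simp only [Finset.sum_insert ha]
    rw [pd_add k (h a (Finset.mem_insert_self a s))
      (DifferentiableAt.fun_sum fun i hi => h i (Finset.mem_insert_of_mem hi)),
      ih fun i hi => h i (Finset.mem_insert_of_mem hi)]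

/-! ### Sum-manipulation helpers -/

private lemma sum_comm3 (f : Fin n → Fin n → Fin n → ℝ) :
    ∑ a, ∑ b, ∑ c, f a b c = ∑ c, ∑ b, ∑ a, f a b c := by
  calc ∑ a, ∑ b, ∑ c, f a b c
      = ∑ a, ∑ c, ∑ b, f a b c := Finset.sum_congr rfl fun a _ => Finset.sum_comm
    _ = ∑ c, ∑ a, ∑ b, f a b c := Finset.sum_comm
    _ = ∑ c, ∑ b, ∑ a, f a b c := Finset.sum_congr rfl fun c _ => Finset.sum_comm

private lemma contr2 (p M : Matrix (Fin n) (Fin n) ℝ) (hp : ∀ a b, p a b = -p b a)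
    (u v : Fin n) :
    ∑ b, ∑ c, p u b * M b c * p v c = -((p * M * p) u v) := by
  have h1 : ∑ b, ∑ c, p u b * M b c * p v c = -(∑ b, ∑ c, p u b * M b c * p c v) := by
    rw [← Finset.sum_neg_distrib]
    refine Finset.sum_congr rfl fun b _ => ?_
    rw [← Finset.sum_neg_distrib]
    refine Finset.sum_congr rfl fun c _ => ?_
    rw [hp v c]; ring
  rw [h1]
  congr 1
  simp only [Matrix.mul_apply, Finset.sum_mul]
  exact Finset.sum_comm

private lemma antisym_conj {p M : Matrix (Fin n) (Fin n) ℝ}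
    (hp : ∀ a b, p a b = -p b a) (hM : ∀ a b, M a b = -M b a) (u v : Fin n) :
    (p * M * p) u v = -((p * M * p) v u) := by
  have hpt : pᵀ = -p := by
    ext a b
    simp only [Matrix.transpose_apply, Matrix.neg_apply]
    exact hp b a
  have hMt : Mᵀ = -M := by
    ext a b
    simp only [Matrix.transpose_apply, Matrix.neg_apply]
    exact hM b a
  have h : (p * M * p)ᵀ = -(p * M * p) := by
    rw [Matrix.transpose_mul, Matrix.transpose_mul, hpt, hMt]
    simp [Matrix.neg_mul, Matrix.mul_neg, Matrix.mul_assoc]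
  calc (p * M * p) u v = ((p * M * p)ᵀ) v u := (Matrix.transpose_apply _ _ _).symm
    _ = -((p * M * p) v u) := by rw [h]; simp

private lemma stepA (p : Matrix (Fin n) (Fin n) ℝ) (dW : Fin n → Matrix (Fin n) (Fin n) ℝ)
    (hp : ∀ a b, p a b = -p b a) (hdW : ∀ m a b, dW m a b = -dW m b a) (i j k : Fin n) :
    -(∑ a, ∑ c, ∑ e, p i a * p j c * p k e * (dW a c e - dW c a e + dW e a c))
      = ∑ a, (p i a * ((p * dW a * p) j k) + p j a * ((p * dW a * p) k i)
          + p k a * ((p * dW a * p) i j)) := by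
  have split : (∑ a, ∑ c, ∑ e, p i a * p j c * p k e * (dW a c e - dW c a e + dW e a c))
      = (∑ a, ∑ c, ∑ e, p i a * p j c * p k e * dW a c e)
        - (∑ a, ∑ c, ∑ e, p i a * p j c * p k e * dW c a e)
        + (∑ a, ∑ c, ∑ e, p i a * p j c * p k e * dW e a c) := by
    simp only [mul_sub, mul_add, Finset.sum_sub_distrib, Finset.sum_add_distrib]
  have h1 : (∑ a, ∑ c, ∑ e, p i a * p j c * p k e * dW a c e)
      = -∑ a, p i a * ((p * dW a * p) j k) := by
    rw [← Finset.sum_neg_distrib]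
    refine Finset.sum_congr rfl fun a _ => ?_
    have e1 : ∑ c, ∑ e, p i a * p j c * p k e * dW a c e
        = p i a * ∑ c, ∑ e, p j c * dW a c e * p k e := by
      simp only [Finset.mul_sum]
      exact Finset.sum_congr rfl fun c _ => Finset.sum_congr rfl fun e _ => by ring
    rw [e1, contr2 p (dW a) hp j k]; ring
  have h2 : (∑ a, ∑ c, ∑ e, p i a * p j c * p k e * dW c a e)
      = ∑ c, p j c * ((p * dW c * p) k i) := by
    rw [Finset.sum_comm]
    refine Finset.sum_congr rfl fun c _ => ?_
    have e1 : ∑ a, ∑ e, p i a * p j c * p k e * dW c a e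
        = p j c * ∑ a, ∑ e, p i a * dW c a e * p k e := by
      simp only [Finset.mul_sum]
      exact Finset.sum_congr rfl fun a _ => Finset.sum_congr rfl fun e _ => by ring
    rw [e1, contr2 p (dW c) hp i k, antisym_conj hp (hdW c) i k]; ring
  have h3 : (∑ a, ∑ c, ∑ e, p i a * p j c * p k e * dW e a c)
      = -∑ e, p k e * ((p * dW e * p) i j) := by
    rw [sum_comm3, ← Finset.sum_neg_distrib]
    refine Finset.sum_congr rfl fun e _ => ?_
    rw [Finset.sum_comm]
    have e1 : ∑ a, ∑ c, p i a * p j c * p k e * dW e a c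
        = p k e * ∑ a, ∑ c, p i a * dW e a c * p j c := by
      simp only [Finset.mul_sum]
      exact Finset.sum_congr rfl fun a _ => Finset.sum_congr rfl fun c _ => by ring
    rw [e1, contr2 p (dW e) hp i j]; ring
  rw [split, h1, h2, h3]
  simp only [Finset.sum_add_distrib]
  ring

-- shape1 : ∑ m, (p*w*p) u m * dP m v z = ∑ s, ∑ t, w s t * (p u s * T t v z)
private lemma shape1 (p w : Matrix (Fin n) (Fin n) ℝ) (dP : Fin n → Matrix (Fin n) (Fin n) ℝ)
    (u v z : Fin n) :
    ∑ m, (p * w * p) u m * dP m v z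
      = ∑ s, ∑ t, w s t * (p u s * ∑ m, p t m * dP m v z) := by
  have l : ∑ m, (p * w * p) u m * dP m v z
      = ∑ m, ∑ t, ∑ s, p u s * w s t * p t m * dP m v z := by
    refine Finset.sum_congr rfl fun m _ => ?_
    simp only [Matrix.mul_apply, Finset.sum_mul]
  rw [l, sum_comm3]
  refine Finset.sum_congr rfl fun s _ => Finset.sum_congr rfl fun t _ => ?_
  simp only [Finset.mul_sum]
  refine Finset.sum_congr rfl fun m _ => by ring

private lemma shape2 (p w : Matrix (Fin n) (Fin n) ℝ) (dP : Fin n → Matrix (Fin n) (Fin n) ℝ)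
    (u v z : Fin n) :
    ∑ a, p u a * (dP a * w * p) v z
      = ∑ s, ∑ t, w s t * ((∑ a, p u a * dP a v s) * p t z) := by
  have l : ∑ a, p u a * (dP a * w * p) v z
      = ∑ a, ∑ t, ∑ s, p u a * dP a v s * w s t * p t z := by
    refine Finset.sum_congr rfl fun a _ => ?_
    simp only [Matrix.mul_apply, Finset.sum_mul, Finset.mul_sum]
    refine Finset.sum_congr rfl fun t _ => Finset.sum_congr rfl fun s _ => by ring
  rw [l, sum_comm3]
  refine Finset.sum_congr rfl fun s _ => Finset.sum_congr rfl fun t _ => ?_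
  simp only [Finset.sum_mul, Finset.mul_sum]
  refine Finset.sum_congr rfl fun a _ => by ring

private lemma shape3 (p w : Matrix (Fin n) (Fin n) ℝ) (dP : Fin n → Matrix (Fin n) (Fin n) ℝ)
    (u v z : Fin n) :
    ∑ a, p u a * (p * w * dP a) v z
      = ∑ s, ∑ t, w s t * (p v s * ∑ a, p u a * dP a t z) := by
  have l : ∑ a, p u a * (p * w * dP a) v z
      = ∑ a, ∑ t, ∑ s, p v s * w s t * dP a t z * p u a := by
    refine Finset.sum_congr rfl fun a _ => ?_
    simp only [Matrix.mul_apply, Finset.sum_mul, Finset.mul_sum]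
    refine Finset.sum_congr rfl fun t _ => Finset.sum_congr rfl fun s _ => by ring
  rw [l, sum_comm3]
  refine Finset.sum_congr rfl fun s _ => Finset.sum_congr rfl fun t _ => ?_
  simp only [Finset.mul_sum]
  refine Finset.sum_congr rfl fun a _ => by ring

private lemma keysum (p w : Matrix (Fin n) (Fin n) ℝ) (T : Fin n → Fin n → Fin n → ℝ)
    (i j k : Fin n)
    (hp : ∀ a b, p a b = -p b a) (hw : ∀ a b, w a b = -w b a)
    (hT : ∀ a b c, T a b c = -T a c b)
    (hG : ∀ a b c, T a b c + T b c a + T c a b = 0) :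
    ∑ s, ∑ t, w s t * (p i s * T t j k + T i j s * p t k + p j s * T i t k
      + p j s * T t k i + T j k s * p t i + p k s * T j t i
      + p k s * T t i j + T k i s * p t j + p i s * T k t j) = 0 := by
  set K : Fin n → Fin n → ℝ := fun s t => p i s * T t j k + T i j s * p t k + p j s * T i t k
      + p j s * T t k i + T j k s * p t i + p k s * T j t i
      + p k s * T t i j + T k i s * p t j + p i s * T k t j with hK
  have hsym : ∀ s t, K s t = K t s := by
    intro s t
    simp only [hK]
    linear_combination (p t k + p k t) * hT i j s + (p t i + p i t) * hT j k s
      + (p t j + p j t) * hT k i s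
      - (p s k + p k s) * hT i j t - (p s i + p i s) * hT j k t - (p s j + p j s) * hT k i t
      - T i s j * hp k t - T j s k * hp i t - T k s i * hp j t
      + T i t j * hp k s + T j t k * hp i s + T k t i * hp j s
      + p i s * hG t j k + p j s * hG t k i + p k s * hG t i j
      - p i t * hG s j k - p j t * hG s k i - p k t * hG s i j
  have h2 : ∑ s, ∑ t, w s t * K s t = -∑ s, ∑ t, w s t * K s t := by
    calc ∑ s, ∑ t, w s t * K s t
        = ∑ s, ∑ t, w s t * K t s :=
          Finset.sum_congr rfl fun s _ => Finset.sum_congr rfl fun t _ => by rw [hsym]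
      _ = ∑ t, ∑ s, w s t * K t s := Finset.sum_comm
      _ = ∑ s, ∑ t, w t s * K s t := rfl
      _ = -∑ s, ∑ t, w s t * K s t := by
          rw [← Finset.sum_neg_distrib]
          refine Finset.sum_congr rfl fun s _ => ?_
          rw [← Finset.sum_neg_distrib]
          refine Finset.sum_congr rfl fun t _ => ?_
          rw [hw t s]; ring
  linarith

private lemma master_algebra (p w b : Matrix (Fin n) (Fin n) ℝ)
    (dP dB dW : Fin n → Matrix (Fin n) (Fin n) ℝ)
    (hp : ∀ a c, p a c = -p c a) (hw : ∀ a c, w a c = -w c a)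
    (hdP : ∀ m a c, dP m a c = -dP m c a) (hdW : ∀ m a c, dW m a c = -dW m c a)
    (hb : b = p * w * p)
    (hX : ∀ m, dP m * w * p + p * dW m * p + p * w * dP m = dB m)
    (hG : ∀ a c e, (∑ m, p a m * dP m c e) + (∑ m, p c m * dP m e a)
        + (∑ m, p e m * dP m a c) = 0)
    (i j k : Fin n) :
    ∑ m, (p i m * dB m j k + b i m * dP m j k + p j m * dB m k i + b j m * dP m k i
        + p k m * dB m i j + b k m * dP m i j)
      = -(∑ a, ∑ c, ∑ e, p i a * p j c * p k e * (dW a c e - dW c a e + dW e a c)) := by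
  have hY : ∀ m, p * dW m * p = dB m - dP m * w * p - p * w * dP m := by
    intro m; rw [← hX m]; abel
  rw [stepA p dW hp hdW i j k]
  have expand : ∑ a, (p i a * ((p * dW a * p) j k) + p j a * ((p * dW a * p) k i)
      + p k a * ((p * dW a * p) i j))
      = (∑ m, (p i m * dB m j k + p j m * dB m k i + p k m * dB m i j))
        - (∑ a, (p i a * ((dP a * w * p) j k) + p j a * ((dP a * w * p) k i)
            + p k a * ((dP a * w * p) i j)))
        - (∑ a, (p i a * ((p * w * dP a) j k) + p j a * ((p * w * dP a) k i)
            + p k a * ((p * w * dP a) i j))) := by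
    simp only [hY, Matrix.sub_apply, mul_sub, Finset.sum_sub_distrib, Finset.sum_add_distrib]
    ring
  rw [expand]
  have final : (∑ m, (b i m * dP m j k + b j m * dP m k i + b k m * dP m i j))
      + (∑ a, (p i a * ((dP a * w * p) j k) + p j a * ((dP a * w * p) k i)
          + p k a * ((dP a * w * p) i j)))
      + (∑ a, (p i a * ((p * w * dP a) j k) + p j a * ((p * w * dP a) k i)
          + p k a * ((p * w * dP a) i j))) = 0 := by
    have e2 : (∑ m, (b i m * dP m j k + b j m * dP m k i + b k m * dP m i j))
        = (∑ m, (p * w * p) i m * dP m j k) + (∑ m, (p * w * p) j m * dP m k i)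
          + (∑ m, (p * w * p) k m * dP m i j) := by
      simp only [hb, Finset.sum_add_distrib]
    have e3 : (∑ a, (p i a * ((dP a * w * p) j k) + p j a * ((dP a * w * p) k i)
          + p k a * ((dP a * w * p) i j)))
        = (∑ a, p i a * ((dP a * w * p) j k)) + (∑ a, p j a * ((dP a * w * p) k i))
          + (∑ a, p k a * ((dP a * w * p) i j)) := by
      simp only [Finset.sum_add_distrib]
    have e4 : (∑ a, (p i a * ((p * w * dP a) j k) + p j a * ((p * w * dP a) k i)
          + p k a * ((p * w * dP a) i j)))
        = (∑ a, p i a * ((p * w * dP a) j k)) + (∑ a, p j a * ((p * w * dP a) k i))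
          + (∑ a, p k a * ((p * w * dP a) i j)) := by
      simp only [Finset.sum_add_distrib]
    rw [e2, e3, e4, shape1 p w dP i j k, shape1 p w dP j k i, shape1 p w dP k i j,
      shape2 p w dP i j k, shape2 p w dP j k i, shape2 p w dP k i j,
      shape3 p w dP i j k, shape3 p w dP j k i, shape3 p w dP k i j]
    have merge : ∀ f g : Fin n → Fin n → ℝ,
        (∑ s, ∑ t, f s t) + (∑ s, ∑ t, g s t) = ∑ s, ∑ t, (f s t + g s t) := by
      intro f g; rw [← Finset.sum_add_distrib]
      exact Finset.sum_congr rfl fun s _ => (Finset.sum_add_distrib).symm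
    rw [merge, merge, merge, merge, merge, merge, merge, merge]
    have key := keysum p w (fun a c e => ∑ m, p a m * dP m c e) i j k hp hw
      (fun a c e => by
        rw [← Finset.sum_neg_distrib]
        exact Finset.sum_congr rfl fun m _ => by rw [hdP m c e]; ring)
      hG
    rw [← key]
    refine Finset.sum_congr rfl fun s _ => Finset.sum_congr rfl fun t _ => by ring
  have splitL : ∑ m, (p i m * dB m j k + b i m * dP m j k + p j m * dB m k i
      + b j m * dP m k i + p k m * dB m i j + b k m * dP m i j)
      = (∑ m, (p i m * dB m j k + p j m * dB m k i + p k m * dB m i j))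
        + (∑ m, (b i m * dP m j k + b j m * dP m k i + b k m * dP m i j)) := by
    simp only [Finset.sum_add_distrib]
    ring
  linarith [final, splitL]

private lemma mul3_apply (A B C : Matrix (Fin n) (Fin n) ℝ) (e f : Fin n) :
    (A * B * C) e f = ∑ t, (∑ s, A e s * B s t) * C t f := by
  rw [Matrix.mul_apply]
  refine Finset.sum_congr rfl fun t _ => ?_
  rw [Matrix.mul_apply]

/-! ### Rearrangement of the Schouten bracket -/

private lemma schouten_eq (H K : (Fin n → ℝ) → Matrix (Fin n) (Fin n) ℝ) (x : Fin n → ℝ)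
    (hH : ∀ a b, H x a b = -H x b a) (hK : ∀ a b, K x a b = -K x b a) (i j k : Fin n) :
    schouten H K x i j k
      = ∑ m, (K x i m * pd m (fun y => H y j k) x + H x i m * pd m (fun y => K y j k) x
        + K x j m * pd m (fun y => H y k i) x + H x j m * pd m (fun y => K y k i) x
        + K x k m * pd m (fun y => H y i j) x + H x k m * pd m (fun y => K y i j) x) := by
  unfold schouten
  rw [← Finset.sum_neg_distrib]
  refine Finset.sum_congr rfl fun m _ => ?_
  rw [hK m k, hH m k, hK m i, hH m i, hK m j, hH m j]
  ring

end Auxiliary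

/-- for nondegenerate Poisson `P` and any bivector `B`, `[B,P] = 0` iff the
two-form `ω_B = P⁻¹ B P⁻¹` is closed. -/
theorem schouten_eq_zero_iff_closed {n : ℕ} (hn : 1 ≤ n)
    (P : (Fin n → ℝ) → Matrix (Fin n) (Fin n) ℝ)
    (hP : IsPoisson P) (hnd : ∀ x, IsUnit (P x))
    (B : (Fin n → ℝ) → Matrix (Fin n) (Fin n) ℝ) (hB : IsBivector B) :
    (∀ x i j k, schouten B P x i j k = 0) ↔
      ∀ (x : Fin n → ℝ) (i j k : Fin n),
        pd i (fun y => ((P y)⁻¹ * B y * (P y)⁻¹) j k) x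
        - pd j (fun y => ((P y)⁻¹ * B y * (P y)⁻¹) i k) x
        + pd k (fun y => ((P y)⁻¹ * B y * (P y)⁻¹) i j) x = 0 := by
  classical
  obtain ⟨⟨hPs, hPa⟩, hPP⟩ := hP
  obtain ⟨hBs, hBa⟩ := hB
  have hPa' : ∀ x a b, P x a b = -P x b a := by
    intro x a b
    have := congrFun (congrFun (hPa x) b) a
    simpa [Matrix.transpose_apply] using this
  have hBa' : ∀ x a b, B x a b = -B x b a := by
    intro x a b
    have := congrFun (congrFun (hBa x) b) a
    simpa [Matrix.transpose_apply] using this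
  have hdet : ∀ x, IsUnit (P x).det := fun x => (Matrix.isUnit_iff_isUnit_det _).1 (hnd x)
  have hpq : ∀ x, P x * (P x)⁻¹ = 1 := fun x => Matrix.mul_nonsing_inv _ (hdet x)
  have hqp : ∀ x, (P x)⁻¹ * P x = 1 := fun x => Matrix.nonsing_inv_mul _ (hdet x)
  have hPWP : ∀ y, P y * ((P y)⁻¹ * B y * (P y)⁻¹) * P y = B y := by
    intro y
    have h1 : P y * ((P y)⁻¹ * B y * (P y)⁻¹) * P y
        = P y * (P y)⁻¹ * B y * (P y)⁻¹ * P y := by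
      simp only [Matrix.mul_assoc]
    rw [h1, hpq y, one_mul, Matrix.mul_assoc, hqp y, mul_one]
  have hQs := contDiff_inv_entry hPs hnd
  have hWs : ∀ s t, ContDiff ℝ (⊤ : ℕ∞) fun y => ((P y)⁻¹ * B y * (P y)⁻¹) s t := by
    intro s t
    have h : (fun y => ((P y)⁻¹ * B y * (P y)⁻¹) s t)
        = fun y => ∑ u, (∑ v, (P y)⁻¹ s v * B y v u) * (P y)⁻¹ u t := by
      funext y; simp [Matrix.mul_apply]
    rw [h]
    exact ContDiff.sum fun u _ =>
      (ContDiff.sum fun v _ => (hQs s v).mul (hBs v u)).mul (hQs u t)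
  have dP' : ∀ (a b : Fin n) x, DifferentiableAt ℝ (fun y => P y a b) x :=
    fun a b x => ((hPs a b).differentiable (by simp)).differentiableAt
  have dW' : ∀ (a b : Fin n) x, DifferentiableAt ℝ
      (fun y => ((P y)⁻¹ * B y * (P y)⁻¹) a b) x :=
    fun a b x => ((hWs a b).differentiable (by simp)).differentiableAt
  have hQa' : ∀ x a b, (P x)⁻¹ a b = -(P x)⁻¹ b a := by
    intro x a b
    have hninv : (-(P x))⁻¹ = -(P x)⁻¹ := by
      apply Matrix.inv_eq_right_inv
      rw [Matrix.neg_mul, Matrix.mul_neg, neg_neg, hpq x]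
    have ht : ((P x)⁻¹)ᵀ = -(P x)⁻¹ := by
      rw [Matrix.transpose_nonsing_inv, hPa x, hninv]
    have := congrFun (congrFun ht b) a
    simpa [Matrix.transpose_apply] using this
  have hWa' : ∀ x a b, ((P x)⁻¹ * B x * (P x)⁻¹) a b
      = -((P x)⁻¹ * B x * (P x)⁻¹) b a :=
    fun x a b => antisym_conj (hQa' x) (hBa' x) a b
  have hdPa : ∀ x (m a b : Fin n),
      pd m (fun y => P y a b) x = -pd m (fun y => P y b a) x := by
    intro x m a b
    rw [pd_congr (fun y => hPa' y a b) m x, pd_neg]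
  have hdWa : ∀ x (m a b : Fin n),
      pd m (fun y => ((P y)⁻¹ * B y * (P y)⁻¹) a b) x
        = -pd m (fun y => ((P y)⁻¹ * B y * (P y)⁻¹) b a) x := by
    intro x m a b
    rw [pd_congr (fun y => hWa' y a b) m x, pd_neg]
  have hG : ∀ x a c e, (∑ m, P x a m * pd m (fun y => P y c e) x)
      + (∑ m, P x c m * pd m (fun y => P y e a) x)
      + (∑ m, P x e m * pd m (fun y => P y a c) x) = 0 := by
    intro x a c e
    have h0 := hPP x a c e
    rw [schouten_eq P P x (hPa' x) (hPa' x) a c e] at h0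
    simp only [Finset.sum_add_distrib] at h0
    linarith
  have hX : ∀ x m,
      (Matrix.of fun a c => pd m (fun y => P y a c) x) * ((P x)⁻¹ * B x * (P x)⁻¹) * P x
      + P x * (Matrix.of fun a c => pd m (fun y => ((P y)⁻¹ * B y * (P y)⁻¹) a c) x) * P x
      + P x * ((P x)⁻¹ * B x * (P x)⁻¹) * (Matrix.of fun a c => pd m (fun y => P y a c) x)
      = Matrix.of fun a c => pd m (fun y => B y a c) x := by
    intro x m
    ext e f
    have hpdB : pd m (fun y => B y e f) x
        = ∑ t, ((∑ s, (pd m (fun y => P y e s) x * ((P x)⁻¹ * B x * (P x)⁻¹) s t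
            + P x e s * pd m (fun y => ((P y)⁻¹ * B y * (P y)⁻¹) s t) x)) * P x t f
          + (∑ s, P x e s * ((P x)⁻¹ * B x * (P x)⁻¹) s t) * pd m (fun y => P y t f) x) := by
      have hcongr : pd m (fun y => B y e f) x
          = pd m (fun y => ∑ t, (∑ s, P y e s * ((P y)⁻¹ * B y * (P y)⁻¹) s t) * P y t f) x := by
        refine pd_congr (fun y => ?_) m x
        conv_lhs => rw [← hPWP y]
        exact mul3_apply _ _ _ e f
      rw [hcongr, pd_sum m Finset.univ (fun t y => (∑ s, P y e s * ((P y)⁻¹ * B y * (P y)⁻¹) s t) * P y t f)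
        (fun t _ => (DifferentiableAt.fun_sum fun s _ => (dP' e s x).mul (dW' s t x)).mul
          (dP' t f x))]
      refine Finset.sum_congr rfl fun t _ => ?_
      rw [pd_mul (f := fun y => ∑ s, P y e s * ((P y)⁻¹ * B y * (P y)⁻¹) s t) m (DifferentiableAt.fun_sum fun s _ => (dP' e s x).mul (dW' s t x)) (dP' t f x),
        pd_sum m Finset.univ (fun s y => P y e s * ((P y)⁻¹ * B y * (P y)⁻¹) s t) (fun s _ => (dP' e s x).mul (dW' s t x))]
      have inner : ∑ s, pd m (fun y => P y e s * ((P y)⁻¹ * B y * (P y)⁻¹) s t) x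
          = ∑ s, (pd m (fun y => P y e s) x * ((P x)⁻¹ * B x * (P x)⁻¹) s t
              + P x e s * pd m (fun y => ((P y)⁻¹ * B y * (P y)⁻¹) s t) x) :=
        Finset.sum_congr rfl fun s _ => pd_mul m (dP' e s x) (dW' s t x)
      rw [inner]
    show ((Matrix.of fun a c => pd m (fun y => P y a c) x) * ((P x)⁻¹ * B x * (P x)⁻¹) * P x
      + P x * (Matrix.of fun a c => pd m (fun y => ((P y)⁻¹ * B y * (P y)⁻¹) a c) x) * P x
      + P x * ((P x)⁻¹ * B x * (P x)⁻¹) * (Matrix.of fun a c => pd m (fun y => P y a c) x)) e f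
      = (Matrix.of fun a c => pd m (fun y => B y a c) x) e f
    rw [Matrix.add_apply, Matrix.add_apply, mul3_apply, mul3_apply, mul3_apply, Matrix.of_apply,
      hpdB, ← Finset.sum_add_distrib, ← Finset.sum_add_distrib]
    refine Finset.sum_congr rfl fun t _ => ?_
    simp only [Matrix.of_apply, Finset.sum_add_distrib, add_mul]
  have master : ∀ x i j k, schouten B P x i j k
      = -(∑ a, ∑ c, ∑ e, P x i a * P x j c * P x k e *
          (pd a (fun y => ((P y)⁻¹ * B y * (P y)⁻¹) c e) x
           - pd c (fun y => ((P y)⁻¹ * B y * (P y)⁻¹) a e) x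
           + pd e (fun y => ((P y)⁻¹ * B y * (P y)⁻¹) a c) x)) := by
    intro x i j k
    rw [schouten_eq B P x (hBa' x) (hPa' x) i j k]
    have MA := master_algebra (P x) ((P x)⁻¹ * B x * (P x)⁻¹) (B x)
      (fun m => Matrix.of fun a c => pd m (fun y => P y a c) x)
      (fun m => Matrix.of fun a c => pd m (fun y => B y a c) x)
      (fun m => Matrix.of fun a c => pd m (fun y => ((P y)⁻¹ * B y * (P y)⁻¹) a c) x)
      (hPa' x) (hWa' x) (fun m a c => hdPa x m a c) (fun m a c => hdWa x m a c)
      (hPWP x).symm (fun m => hX x m) (hG x) i j k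
    simpa [Matrix.of_apply] using MA
  constructor
  · intro hS x u v z
    set Df : Fin n → Fin n → Fin n → ℝ := fun a c e =>
      pd a (fun y => ((P y)⁻¹ * B y * (P y)⁻¹) c e) x
      - pd c (fun y => ((P y)⁻¹ * B y * (P y)⁻¹) a e) x
      + pd e (fun y => ((P y)⁻¹ * B y * (P y)⁻¹) a c) x with hDf
    have lem1 : ∀ (g : Fin n → ℝ) u, (∀ i, ∑ a, P x i a * g a = 0) → g u = 0 := by
      intro g u hg
      have h1 : ∑ i, (P x)⁻¹ u i * ∑ a, P x i a * g a = g u := by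
        calc ∑ i, (P x)⁻¹ u i * ∑ a, P x i a * g a
            = ∑ i, ∑ a, (P x)⁻¹ u i * (P x i a * g a) :=
              Finset.sum_congr rfl fun i _ => Finset.mul_sum _ _ _
          _ = ∑ a, ∑ i, (P x)⁻¹ u i * (P x i a * g a) := Finset.sum_comm
          _ = ∑ a, ((P x)⁻¹ * P x) u a * g a := by
              refine Finset.sum_congr rfl fun a _ => ?_
              rw [Matrix.mul_apply, Finset.sum_mul]
              exact Finset.sum_congr rfl fun i _ => by ring
          _ = g u := by rw [hqp x]; simp [Matrix.one_apply]
      rw [← h1]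
      exact Finset.sum_eq_zero fun i _ => by rw [hg i, mul_zero]
    have hzero : ∀ i j k, ∑ a, P x i a * ∑ c, P x j c * ∑ e, P x k e * Df a c e = 0 := by
      intro i j k
      have hm := master x i j k
      rw [hS x i j k] at hm
      have refact : ∑ a, ∑ c, ∑ e, P x i a * P x j c * P x k e * Df a c e
          = ∑ a, P x i a * ∑ c, P x j c * ∑ e, P x k e * Df a c e := by
        refine Finset.sum_congr rfl fun a _ => ?_
        rw [Finset.mul_sum]
        refine Finset.sum_congr rfl fun c _ => ?_
        rw [Finset.mul_sum, Finset.mul_sum]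
        refine Finset.sum_congr rfl fun e _ => by ring
      rw [← refact]
      linarith
    have s1 : ∀ a j k, ∑ c, P x j c * ∑ e, P x k e * Df a c e = 0 := by
      intro a j k
      exact lem1 (fun a' => ∑ c, P x j c * ∑ e, P x k e * Df a' c e) a
        (fun i => hzero i j k)
    have s2 : ∀ a c k, ∑ e, P x k e * Df a c e = 0 := by
      intro a c k
      exact lem1 (fun c' => ∑ e, P x k e * Df a c' e) c (fun j => s1 a j k)
    have s3 : Df u v z = 0 :=
      lem1 (fun e => Df u v e) z (fun k => s2 u v k)
    simpa [hDf] using s3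
  · intro hD x i j k
    rw [master x i j k]
    have hz : ∀ a c e, (pd a (fun y => ((P y)⁻¹ * B y * (P y)⁻¹) c e) x
        - pd c (fun y => ((P y)⁻¹ * B y * (P y)⁻¹) a e) x
        + pd e (fun y => ((P y)⁻¹ * B y * (P y)⁻¹) a c) x) = 0 := fun a c e => hD x a c e
    simp only [hz, mul_zero, Finset.sum_const_zero, neg_zero]
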